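/- For every acyclic directed graph G, the Sperner capacity equals the logarithm of the number of vertices: Σ(G) = log |V(G)|. -/

import Mathlib

open Real Filter

/-- Adjacency relation of the `n`-fold strong power of the directed graph with
adjacency relation `E`: there is an edge from `x` to `y` iff `x ≠ y` and in each
coordinate `j` either `x j = y j` or there is an edge from `x j` to `y j`. -/
def strongPow {V : Type*} (E : V → V → Prop) (n : ℕ) (x y : Fin n → V) : Prop :=
  x ≠ y ∧ ∀ j, x j = y j ∨ E (x j) (y j)

/-- `l` is a directed cycle of the graph `E` all of whose vertices lie in `A`:
a list of at least two distinct vertices with an edge between consecutive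
vertices and an edge from the last vertex back to the first. -/
def IsCycleIn {V : Type*} (E : V → V → Prop) (A : Set V) (l : List V) : Prop :=
  2 ≤ l.length ∧ l.Nodup ∧ (∀ x ∈ l, x ∈ A) ∧ l.Chain' E ∧
    ∀ x ∈ l.head?, ∀ y ∈ l.getLast?, E y x

/-- The subgraph of `E` induced by `A` is acyclic. -/
def AcyclicOn {V : Type*} (E : V → V → Prop) (A : Set V) : Prop :=
  ¬ ∃ l : List V, IsCycleIn E A l

/-- `α(G)`: the maximum cardinality of an independent set in the graph `E`. -/
noncomputable def alphaOf {V : Type*} [Fintype V] (E : V → V → Prop) : ℕ :=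
  sSup {k : ℕ | ∃ A : Finset V, (∀ x ∈ A, ∀ y ∈ A, ¬ E x y) ∧ A.card = k}

/-- `ρ(G)`: the maximum cardinality of a subset of vertices inducing an acyclic
subgraph of `E`. -/
noncomputable def rhoOf {V : Type*} [Fintype V] (E : V → V → Prop) : ℕ :=
  sSup {k : ℕ | ∃ A : Finset V, AcyclicOn E ↑A ∧ A.card = k}

/-- The Sperner capacity `Σ(G) = lim_n (1/n) log α(Gⁿ) = sup_n (1/n) log α(Gⁿ)`
of the graph `E` (natural logarithms). -/
noncomputable def spernerCap {V : Type*} [Fintype V] (E : V → V → Prop) : ℝ :=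
  sSup {x : ℝ | ∃ n : ℕ, 1 ≤ n ∧ x = Real.log (alphaOf (strongPow E n)) / n}

/-!
Give every vertex of the acyclic graph `G` a height `h(v) ≤ |V|` that strictly increases along
edges (the number of vertices from which `v` is reachable). If `x → y` is an edge of `Gⁿ`, then
`∑ⱼ h(xⱼ) < ∑ⱼ h(yⱼ)`, so each level set of the height sum is independent in `Gⁿ`. These
`n|V| + 1` level sets cover all `|V|ⁿ` vertices of `Gⁿ`, whence
`|V|ⁿ / (n|V| + 1) ≤ α(Gⁿ) ≤ |V|ⁿ`, and `log (n|V| + 1) / n → 0`.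
-/

open Finset Topology

namespace List

theorem exists_nodup_isChain_cons_of_reflTransGen {α : Type*} {r : α → α → Prop} {a b : α}
    (h : Relation.ReflTransGen r a b) :
    ∃ l, (a :: l).Nodup ∧ (a :: l).IsChain r ∧ (a :: l).getLast (cons_ne_nil _ _) = b := by
  induction h using Relation.ReflTransGen.head_induction_on with
  | refl => exact ⟨[], nodup_singleton _, .singleton _, rfl⟩
  | @head a c hac _ ih =>
    obtain ⟨l, hnd, hch, hlast⟩ := ih
    by_cases ha : a ∈ c :: l
    · obtain ⟨s, t, hst⟩ := mem_iff_append.mp ha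
      rw [hst] at hnd hch
      refine ⟨t, hnd.of_append_right, hch.right_of_append, ?_⟩
      simp_rw [hst] at hlast
      rwa [getLast_append_of_ne_nil] at hlast
    · exact ⟨c :: l, nodup_cons.2 ⟨ha, hnd⟩, hch.cons_cons hac, by rwa [getLast_cons_cons]⟩

end List

theorem Real.log_natCast_le_log_natCast {a b : ℕ} (h : a ≤ b) : log a ≤ log b := by
  rcases Nat.eq_zero_or_pos a with rfl | ha
  · simpa using log_natCast_nonneg b
  · exact log_le_log (by positivity) (by exact_mod_cast h)

theorem Real.log_natCast_sub_log_natCast_le {a b c : ℕ} (h : a ≤ b * c) :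
    log a - log b ≤ log c := by
  rcases Nat.eq_zero_or_pos (b * c) with hbc | hbc
  · obtain rfl : a = 0 := by omega
    simp only [Nat.cast_zero, log_zero, zero_sub]
    linarith [log_natCast_nonneg b, log_natCast_nonneg c]
  · obtain ⟨hb, hc⟩ := Nat.mul_ne_zero_iff.mp hbc.ne'
    have := log_natCast_le_log_natCast h
    rw [Nat.cast_mul, log_mul (by exact_mod_cast hb) (by exact_mod_cast hc)] at this
    linarith

theorem tendsto_log_mul_add_one_div_atTop {c : ℝ} (hc : 0 ≤ c) :
    Tendsto (fun n : ℕ => log (n * c + 1) / n) atTop (𝓝 0) := by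
  rcases hc.eq_or_lt with rfl | hc
  · simp
  have h := (tendsto_pow_log_div_mul_add_atTop c⁻¹ (-c⁻¹) 1 (by positivity)).comp
    (tendsto_atTop_add_const_right _ 1 (tendsto_natCast_atTop_atTop.atTop_mul_const hc))
  refine h.congr fun n => ?_
  simp only [Function.comp_apply, pow_one]
  congr 1
  field_simp
  ring

theorem csSup_setOf_eq_of_tendsto {a : ℕ → ℝ} {L : ℝ} (hle : ∀ n, a n ≤ L)
    (ha : Tendsto a atTop (𝓝 L)) : sSup {x | ∃ n, 1 ≤ n ∧ x = a n} = L := by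
  refine (isLUB_of_mem_closure ?_ (mem_closure_of_tendsto ha ?_)).csSup_eq ⟨a 1, 1, le_rfl, rfl⟩
  · rintro _ ⟨n, -, rfl⟩
    exact hle n
  · exact (eventually_ge_atTop 1).mono fun n hn => ⟨n, hn, rfl⟩

section

variable {V : Type*}

/- Cycles in `IsCycleIn` have at least two vertices, so loops of `E` are invisible to `AcyclicOn`
(as they are to `strongPow`); hence only the loop-free part of `E` is acyclic. -/
theorem AcyclicOn.not_transGen_self {E : V → V → Prop} (h : AcyclicOn E Set.univ) (x : V) :
    ¬ Relation.TransGen (fun a b => a ≠ b ∧ E a b) x x := by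
  intro hx
  obtain ⟨y, hxy, hyx⟩ := Relation.TransGen.head'_iff.mp hx
  obtain ⟨l, hnd, hch, hlast⟩ := List.exists_nodup_isChain_cons_of_reflTransGen hyx
  have hl : l ≠ [] := by
    rintro rfl
    exact hxy.1 hlast.symm
  refine h ⟨y :: l, by simpa [Nat.one_le_iff_ne_zero] using hl, hnd, fun _ _ => trivial,
    hch.imp fun _ _ => And.right, ?_⟩
  simp [List.getLast?_eq_some_getLast, hlast, hxy.2]

theorem AcyclicOn.exists_height [Fintype V] {E : V → V → Prop} (h : AcyclicOn E Set.univ) :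
    ∃ f : V → ℕ, (∀ x, f x ≤ Fintype.card V) ∧ ∀ x y, x ≠ y → E x y → f x < f y := by
  classical
  let r a b := a ≠ b ∧ E a b
  refine ⟨fun x => #{y | Relation.TransGen r y x}, fun x => card_le_univ _, ?_⟩
  intro x y hne hxy
  refine card_lt_card ((ssubset_iff_of_subset ?_).2 ⟨x, ?_, ?_⟩)
  · intro z
    simpa using fun hzx => hzx.tail ⟨hne, hxy⟩
  · simpa using Relation.TransGen.single ⟨hne, hxy⟩
  · simpa using h.not_transGen_self x

theorem card_le_alphaOf [Fintype V] (E : V → V → Prop) {A : Finset V}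
    (hA : ∀ x ∈ A, ∀ y ∈ A, ¬ E x y) : #A ≤ alphaOf E :=
  le_csSup ⟨Fintype.card V, by rintro _ ⟨B, -, rfl⟩; exact B.card_le_univ⟩ ⟨A, hA, rfl⟩

theorem alphaOf_le_card [Fintype V] (E : V → V → Prop) : alphaOf E ≤ Fintype.card V :=
  csSup_le ⟨0, ∅, by simp, rfl⟩ (by rintro _ ⟨A, -, rfl⟩; exact A.card_le_univ)

theorem alphaOf_strongPow_le [Fintype V] (E : V → V → Prop) (n : ℕ) :
    alphaOf (strongPow E n) ≤ Fintype.card V ^ n := by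
  simpa using alphaOf_le_card (strongPow E n)

theorem sum_lt_sum_of_strongPow {E : V → V → Prop} {f : V → ℕ}
    (hf : ∀ x y, x ≠ y → E x y → f x < f y) {n : ℕ} {x y : Fin n → V} (hxy : strongPow E n x y) :
    ∑ j, f (x j) < ∑ j, f (y j) := by
  obtain ⟨hne, hE⟩ := hxy
  have hlt : ∀ j, x j ≠ y j → f (x j) < f (y j) := fun j hj => hf _ _ hj ((hE j).resolve_left hj)
  obtain ⟨j, hj⟩ := Function.ne_iff.mp hne
  refine sum_lt_sum (fun i _ => ?_) ⟨j, mem_univ _, hlt j hj⟩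
  by_cases hi : x i = y i
  · rw [hi]
  · exact (hlt i hi).le

theorem card_pow_le_mul_alphaOf_strongPow [Fintype V] {E : V → V → Prop} {f : V → ℕ} {M : ℕ}
    (hfM : ∀ x, f x ≤ M) (hf : ∀ x y, x ≠ y → E x y → f x < f y) (n : ℕ) :
    Fintype.card V ^ n ≤ (n * M + 1) * alphaOf (strongPow E n) := by
  classical
  have hmaps : ∀ x ∈ (univ : Finset (Fin n → V)), ∑ j, f (x j) ∈ range (n * M + 1) := by
    intro x _
    have := sum_le_sum fun j (_ : j ∈ univ) => hfM (x j)
    simp only [sum_const, card_univ, Fintype.card_fin, smul_eq_mul] at this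
    exact mem_range.2 (Nat.lt_succ_of_le this)
  have hfiber : ∀ t ∈ range (n * M + 1),
      #{x ∈ (univ : Finset (Fin n → V)) | ∑ j, f (x j) = t} ≤ alphaOf (strongPow E n) := by
    refine fun t _ => card_le_alphaOf _ fun x hx y hy hxy => ?_
    have := sum_lt_sum_of_strongPow hf hxy
    simp only [mem_filter] at hx hy
    omega
  simpa [mul_comm] using card_le_mul_card_image_of_maps_to hmaps _ hfiber

theorem log_alphaOf_strongPow_div_le [Fintype V] (E : V → V → Prop) (n : ℕ) :
    log (alphaOf (strongPow E n)) / n ≤ log (Fintype.card V) := by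
  refine div_le_of_le_mul₀ n.cast_nonneg (log_natCast_nonneg _) ?_
  calc log (alphaOf (strongPow E n)) ≤ log ((Fintype.card V ^ n : ℕ) : ℝ) :=
        log_natCast_le_log_natCast (alphaOf_strongPow_le E n)
    _ = log (Fintype.card V) * n := by rw [Nat.cast_pow, log_pow, mul_comm]

theorem log_card_sub_le_log_alphaOf_strongPow_div [Fintype V] {E : V → V → Prop} {f : V → ℕ}
    {M : ℕ} (hfM : ∀ x, f x ≤ M) (hf : ∀ x y, x ≠ y → E x y → f x < f y) {n : ℕ} (hn : 1 ≤ n) :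
    log (Fintype.card V) - log (n * M + 1) / n ≤ log (alphaOf (strongPow E n)) / n := by
  have hn' : (0 : ℝ) < n := by exact_mod_cast hn
  have := log_natCast_sub_log_natCast_le (card_pow_le_mul_alphaOf_strongPow hfM hf n)
  push_cast at this
  rw [log_pow] at this
  rw [le_div_iff₀ hn', sub_mul, div_mul_cancel₀ _ hn'.ne']
  linarith

end

theorem spernerCap_of_acyclic_general {V : Type*} [Fintype V] (E : V → V → Prop)
    (hacyc : AcyclicOn E Set.univ) :
    spernerCap E = Real.log (Fintype.card V) := by
  obtain ⟨f, hfN, hf⟩ := hacyc.exists_height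
  refine csSup_setOf_eq_of_tendsto (log_alphaOf_strongPow_div_le E) ?_
  have hlower : Tendsto (fun n : ℕ => log (Fintype.card V) - log (n * Fintype.card V + 1) / n)
      atTop (𝓝 (log (Fintype.card V))) := by
    simpa using
      tendsto_const_nhds.sub (tendsto_log_mul_add_one_div_atTop (Fintype.card V).cast_nonneg)
  refine tendsto_of_tendsto_of_tendsto_of_le_of_le' hlower tendsto_const_nhds ?_
    (.of_forall (log_alphaOf_strongPow_div_le E))
  filter_upwards [eventually_ge_atTop 1] with n hn
  exact log_card_sub_le_log_alphaOf_strongPow_div hfN hf hn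

/-- For every acyclic directed graph `G`, the Sperner capacity equals
`log |V(G)|`. -/
theorem spernerCap_of_acyclic {V : Type*} [Fintype V] (E : V → V → Prop)
    (hirr : ∀ x, ¬ E x x) (hacyc : AcyclicOn E Set.univ) :
    spernerCap E = Real.log (Fintype.card V) :=
  spernerCap_of_acyclic_general E hacyc
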